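/- For every λ ≥ 0 and every measurable function h: D → ℝ₊, ∫_D e^{−λ t}·(Λh)(t,x) dt dx = (2/√(1+2λ))·∫_D exp( −(λu + (u−v)(1 + √(1+2λ))) )·h(u,v) du dv. -/

import Mathlib

open MeasureTheory ProbabilityTheory Real Set
open scoped ENNReal NNReal Classical

noncomputable section

/-- `B` is a Brownian motion with drift `μ` started at `0` under the probability
measure `P`: it has almost-everywhere defined continuous paths, `B 0 = 0`, Gaussian
increments `B t - B s ~ N(μ (t-s), t-s)` for `0 ≤ s ≤ t`, and independent increments. -/
structure IsDriftBrownianMotion {Ω : Type*} [MeasurableSpace Ω]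
    (P : Measure Ω) (B : ℝ → Ω → ℝ) (μ : ℝ) : Prop where
  isProb : IsProbabilityMeasure P
  meas : ∀ t : ℝ, Measurable (B t)
  init : ∀ ω, B 0 ω = 0
  cont : ∀ ω, Continuous fun t => B t ω
  incr : ∀ s t : ℝ, 0 ≤ s → s ≤ t →
    Measure.map (fun ω => B t ω - B s ω) P
      = gaussianReal (μ * (t - s)) ((t - s).toNNReal)
  indep : ∀ (n : ℕ) (t : ℕ → ℝ), (∀ i, 0 ≤ t i) → Monotone t →
    iIndepFun
      (fun (i : Fin n) ω => B (t (i + 1)) ω - B (t i) ω) P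

/-- The running supremum `S_t = sup_{0 ≤ s ≤ t} B_s`. -/
def runSup {Ω : Type*} (B : ℝ → Ω → ℝ) (t : ℝ) (ω : Ω) : ℝ :=
  sSup ((fun s => B s ω) '' Set.Icc 0 t)

/-- The set `{t ≥ 0 : m · S_t < t}`. -/
def hitSet {Ω : Type*} (B : ℝ → Ω → ℝ) (m : ℝ) (ω : Ω) : Set ℝ :=
  {t : ℝ | 0 ≤ t ∧ m * runSup B t ω < t}

/-- `T_m = inf {t ≥ 0 : m · S_t < t}` (with the convention `sInf ∅ = 0` of `Real.sInf`;
the event `{T_m < ∞}` is expressed as `(hitSet B m ω).Nonempty`). -/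
def hitTime {Ω : Type*} (B : ℝ → Ω → ℝ) (m : ℝ) (ω : Ω) : ℝ :=
  sInf (hitSet B m ω)

/-! Tonelli turns the left side into `∫_D h(u,v) J(u,v)`, where `J(u,v)` integrates the kernel
over `{(t,x) : t > u, x < t}`. In `J`, the substitution `y = 2t - x - v` makes the `x`-integral
that of an exact derivative, and `t = u + s` leaves the Laplace-type integral
`∫₀^∞ s^{-1/2} e^{-(a²s + b²/s)} ds = (√π / a) e^{-2ab}` with `a² = (1 + 2λ)/2`, `b² = (u - v)²/2`.
That one reduces to the Gaussian integral through `s = r²` and the Cauchy–Schlömilch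
substitution `y = ar - b/r`. -/

open Filter

section RegionFubini

variable {α β : Type*} [MeasurableSpace α] [MeasurableSpace β] {μ : Measure α} {ν : Measure β}

theorem setLIntegral_prod_fiber [SFinite ν] {s : Set α} {t : α → Set β} (hs : MeasurableSet s)
    (hst : MeasurableSet {z : α × β | z.1 ∈ s ∧ z.2 ∈ t z.1}) {f : α × β → ℝ≥0∞}
    (hf : AEMeasurable f (μ.prod ν)) :
    ∫⁻ z in {z : α × β | z.1 ∈ s ∧ z.2 ∈ t z.1}, f z ∂μ.prod ν =
      ∫⁻ x in s, ∫⁻ y in t x, f (x, y) ∂ν ∂μ := by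
  rw [← lintegral_indicator hst, lintegral_prod _ (hf.indicator hst),
    ← lintegral_indicator hs]
  refine lintegral_congr fun x => ?_
  by_cases hx : x ∈ s
  · have ht : MeasurableSet (t x) := by
      simpa [preimage, hx] using hst.preimage (measurable_prodMk_left (x := x))
    rw [indicator_of_mem hx, ← lintegral_indicator ht]
    congr 1
    ext y
    simp only [indicator, mem_ofPred_eq, hx, true_and]
  · simp [indicator, hx]

theorem lintegral_lintegral_swap_fiber [SFinite μ] [SFinite ν] {s : Set α} {t : α → Set β}
    {s' : Set β} {t' : β → Set α} (hs : MeasurableSet s) (hs' : MeasurableSet s')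
    (hst : MeasurableSet {z : α × β | z.1 ∈ s ∧ z.2 ∈ t z.1})
    (hfiber : ∀ x y, x ∈ s ∧ y ∈ t x ↔ y ∈ s' ∧ x ∈ t' y) {f : α → β → ℝ≥0∞}
    (hf : Measurable (Function.uncurry f)) :
    ∫⁻ x in s, ∫⁻ y in t x, f x y ∂ν ∂μ = ∫⁻ y in s', ∫⁻ x in t' y, f x y ∂μ ∂ν := by
  have hswap : Prod.swap ⁻¹' {z : α × β | z.1 ∈ s ∧ z.2 ∈ t z.1} =
      {z : β × α | z.1 ∈ s' ∧ z.2 ∈ t' z.1} := by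
    ext z
    exact hfiber z.2 z.1
  calc ∫⁻ x in s, ∫⁻ y in t x, f x y ∂ν ∂μ
      = ∫⁻ z in {z : α × β | z.1 ∈ s ∧ z.2 ∈ t z.1}, Function.uncurry f z ∂μ.prod ν :=
        (setLIntegral_prod_fiber hs hst hf.aemeasurable).symm
    _ = ∫⁻ z in {z : β × α | z.1 ∈ s' ∧ z.2 ∈ t' z.1}, Function.uncurry f z.swap ∂ν.prod μ := by
        rw [← hswap, Measure.measurePreserving_swap.setLIntegral_comp_preimage hst hf]
    _ = ∫⁻ y in s', ∫⁻ x in t' y, f x y ∂μ ∂ν :=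
        setLIntegral_prod_fiber hs' (hswap ▸ hst.preimage measurable_swap)
          (hf.comp measurable_swap).aemeasurable

end RegionFubini

theorem lintegral_exp_neg_sq :
    ∫⁻ y : ℝ, ENNReal.ofReal (exp (-y ^ 2)) = ENNReal.ofReal √π := by
  rw [← ofReal_integral_eq_lintegral_ofReal (by simpa using integrable_exp_neg_mul_sq one_pos)
    (.of_forall fun y => (exp_pos _).le)]
  simpa using congrArg ENNReal.ofReal (integral_gaussian 1)

theorem lintegral_Ioi_comp_mul_sub_div {a b : ℝ} (ha : 0 < a) (hb : 0 < b) {g : ℝ → ℝ≥0∞}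
    (hg : Measurable g) :
    ENNReal.ofReal a * ∫⁻ u in Ioi 0, (g (a * u - b / u) + g (-(a * u - b / u))) =
      ∫⁻ y, g y := by
  set φ : ℝ → ℝ := fun u => a * u - b / u
  have hgφ : Measurable fun u => g (φ u) := hg.comp (by fun_prop)
  have hφ_deriv : ∀ u ∈ Ioi (0 : ℝ), HasDerivWithinAt φ (a + b / u ^ 2) (Ioi 0) u := by
    intro u hu
    have := ((hasDerivAt_id' u).const_mul a).fun_sub ((hasDerivAt_inv hu.ne').const_mul b)
    refine (this.congr_deriv ?_).hasDerivWithinAt.congr_of_mem (fun x _ => ?_) hu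
    · field_simp
      ring
    · simp [φ, div_eq_mul_inv]
  have hφ_mono : StrictMonoOn φ (Ioi 0) := fun x hx y _ hxy => by
    have := div_lt_div_of_pos_left hb hx hxy
    simp only [φ]
    nlinarith
  have hφ_surj : φ '' Ioi 0 = univ := by
    refine eq_univ_of_forall fun w => ?_
    set r := √(w ^ 2 + 4 * a * b)
    have hr : r ^ 2 = w ^ 2 + 4 * a * b := sq_sqrt (by positivity)
    have hwr : 0 < w + r := by nlinarith [sqrt_nonneg (w ^ 2 + 4 * a * b)]
    refine ⟨(w + r) / (2 * a), div_pos hwr (by positivity), ?_⟩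
    simp only [φ]
    field_simp
    linear_combination hr
  set k := b / a
  have hk : 0 < k := div_pos hb ha
  have hψ_deriv : ∀ u ∈ Ioi (0 : ℝ), HasDerivWithinAt (k / ·) (-(k / u ^ 2)) (Ioi 0) u := by
    intro u hu
    have := (hasDerivAt_inv hu.ne').const_mul k
    refine (this.congr_deriv ?_).hasDerivWithinAt.congr_of_mem (fun x _ => ?_) hu
    · field_simp
    · simp [div_eq_mul_inv]
  have hψ_inj : InjOn (k / ·) (Ioi (0 : ℝ)) := fun x _ y _ hxy => by
    simpa [div_div_cancel₀ hk.ne'] using congrArg (k / ·) hxy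
  have hψ_img : (k / ·) '' Ioi (0 : ℝ) = Ioi 0 := by
    refine Subset.antisymm (image_subset_iff.2 fun u hu => div_pos hk hu) fun w hw => ?_
    exact ⟨k / w, div_pos hk hw, div_div_cancel₀ hk.ne'⟩
  -- the inversion `u ↦ (b / a) / u` turns the `b / u²` part of the Jacobian of `φ` into `a`
  have hinv : ∫⁻ u in Ioi 0, ENNReal.ofReal (b / u ^ 2) * g (φ u) =
      ENNReal.ofReal a * ∫⁻ u in Ioi 0, g (-φ u) := by
    rw [← lintegral_const_mul' _ _ ENNReal.ofReal_ne_top, ← hψ_img,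
      lintegral_image_eq_lintegral_abs_deriv_mul measurableSet_Ioi hψ_deriv hψ_inj, hψ_img]
    refine setLIntegral_congr_fun measurableSet_Ioi fun u (hu : 0 < u) => ?_
    have hφψ : φ (k / u) = -φ u := by
      simp only [φ, k]
      field_simp
      ring
    rw [hφψ, ← mul_assoc, ← ENNReal.ofReal_mul (abs_nonneg _), abs_neg,
      abs_of_pos (by positivity)]
    congr 2
    simp only [k]
    field_simp
  calc ENNReal.ofReal a * ∫⁻ u in Ioi 0, (g (φ u) + g (-φ u))
      = (∫⁻ u in Ioi 0, ENNReal.ofReal a * g (φ u)) +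
          ∫⁻ u in Ioi 0, ENNReal.ofReal (b / u ^ 2) * g (φ u) := by
        rw [hinv, lintegral_add_left hgφ, mul_add,
          lintegral_const_mul' _ _ ENNReal.ofReal_ne_top]
    _ = ∫⁻ u in Ioi 0, ENNReal.ofReal |a + b / u ^ 2| * g (φ u) := by
        rw [← lintegral_add_left (hgφ.const_mul _)]
        refine setLIntegral_congr_fun measurableSet_Ioi fun u (hu : 0 < u) => ?_
        rw [abs_of_pos (by positivity), ENNReal.ofReal_add ha.le (by positivity), add_mul]
    _ = ∫⁻ y, g y := by
        rw [← lintegral_image_eq_lintegral_abs_deriv_mul measurableSet_Ioi hφ_deriv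
          hφ_mono.injOn, hφ_surj, setLIntegral_univ]

theorem lintegral_Ioi_exp_neg_mul_sub_div_sq {a b : ℝ} (ha : 0 < a) (hb : 0 < b) :
    ∫⁻ u in Ioi 0, ENNReal.ofReal (exp (-(a * u - b / u) ^ 2)) =
      ENNReal.ofReal (√π / (2 * a)) := by
  have h := lintegral_Ioi_comp_mul_sub_div ha hb
    (g := fun y => ENNReal.ofReal (exp (-y ^ 2))) (by fun_prop)
  simp only [neg_sq, ← two_mul, lintegral_exp_neg_sq] at h
  rw [lintegral_const_mul' _ _ ENNReal.ofNat_ne_top, ← mul_assoc] at h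
  rw [ENNReal.ofReal_div_of_pos (by positivity), ENNReal.eq_div_iff (by positivity)
    (ENNReal.ofReal_ne_top), ← h, ENNReal.ofReal_mul zero_le_two, mul_comm (ENNReal.ofReal a)]
  simp

theorem lintegral_Ioi_exp_neg_mul_add_div_div_sqrt {a b : ℝ} (ha : 0 < a) (hb : 0 < b) :
    ∫⁻ s in Ioi 0, ENNReal.ofReal (exp (-(a ^ 2 * s + b ^ 2 / s)) / √s) =
      ENNReal.ofReal (√π / a * exp (-(2 * a * b))) := by
  have hsq_img : (fun u : ℝ => u ^ 2) '' Ioi 0 = Ioi 0 :=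
    Subset.antisymm (image_subset_iff.2 fun u (hu : 0 < u) => pow_pos hu 2)
      fun s (hs : 0 < s) => ⟨√s, sqrt_pos.2 hs, sq_sqrt hs.le⟩
  have hsq_inj : InjOn (fun u : ℝ => u ^ 2) (Ioi 0) :=
    (pow_left_strictMonoOn₀ two_ne_zero).injOn.mono fun _ hu => le_of_lt hu
  rw [← hsq_img, lintegral_image_eq_lintegral_abs_deriv_mul measurableSet_Ioi
    (fun u _ => (hasDerivAt_pow 2 u).hasDerivWithinAt) hsq_inj]
  calc ∫⁻ u in Ioi 0, ENNReal.ofReal |(2 : ℕ) * u ^ (2 - 1)| *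
        ENNReal.ofReal (exp (-(a ^ 2 * u ^ 2 + b ^ 2 / u ^ 2)) / √(u ^ 2))
      = ∫⁻ u in Ioi 0, ENNReal.ofReal (2 * exp (-(2 * a * b))) *
          ENNReal.ofReal (exp (-(a * u - b / u) ^ 2)) := by
        refine setLIntegral_congr_fun measurableSet_Ioi fun u (hu : 0 < u) => ?_
        have hsquare : a ^ 2 * u ^ 2 + b ^ 2 / u ^ 2 = (a * u - b / u) ^ 2 + 2 * a * b := by
          field_simp
          ring
        rw [← ENNReal.ofReal_mul (abs_nonneg _), ← ENNReal.ofReal_mul (by positivity),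
          hsquare, neg_add, exp_add, sqrt_sq hu.le, abs_of_pos (by positivity)]
        congr 1
        field_simp
        ring
    _ = ENNReal.ofReal (√π / a * exp (-(2 * a * b))) := by
        rw [lintegral_const_mul' _ _ ENNReal.ofReal_ne_top,
          lintegral_Ioi_exp_neg_mul_sub_div_sq ha hb, ← ENNReal.ofReal_mul (by positivity)]
        congr 1
        field_simp

theorem lintegral_Ioi_mul_exp_neg_sq_div {b c : ℝ} (hb : 0 ≤ b) (hc : 0 < c) :
    ∫⁻ y in Ioi b, ENNReal.ofReal (y * exp (-y ^ 2 / (2 * c))) =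
      ENNReal.ofReal (c * exp (-b ^ 2 / (2 * c))) := by
  set G : ℝ → ℝ := fun y => -(c * exp (-y ^ 2 / (2 * c)))
  have hG : ∀ y, HasDerivAt G (y * exp (-y ^ 2 / (2 * c))) y := fun y => by
    have := (((hasDerivAt_pow 2 y).fun_neg.div_const (2 * c)).exp.const_mul c).fun_neg
    exact this.congr_deriv (by push_cast; field_simp)
  have hnonneg : ∀ y ∈ Ioi b, 0 ≤ y * exp (-y ^ 2 / (2 * c)) := fun y (hy : b < y) => by
    have := exp_pos (-y ^ 2 / (2 * c))
    nlinarith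
  have hG_lim : Tendsto G atTop (nhds 0) := by
    have h := (tendsto_neg_atTop_atBot.comp (tendsto_pow_atTop two_ne_zero)).atBot_div_const
      (by positivity : 0 < 2 * c)
    simpa [G] using ((tendsto_exp_atBot.comp h).const_mul c).neg
  rw [← ofReal_integral_eq_lintegral_ofReal
      (integrableOn_Ioi_deriv_of_nonneg' (fun y _ => hG y) hnonneg hG_lim)
      ((ae_restrict_iff' measurableSet_Ioi).2 (.of_forall hnonneg)),
    integral_Ioi_of_hasDerivAt_of_nonneg' (fun y _ => hG y) hnonneg hG_lim]
  simp [G]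

def lambdaKernel (t x u v : ℝ) : ℝ :=
  (2 * t - x - v) / (t - u) ^ ((3 : ℝ) / 2) * exp (-(2 * t - x - v) ^ 2 / (2 * (t - u)))

theorem lintegral_Iio_lambdaKernel {t u v : ℝ} (hut : u < t) (hvt : v ≤ t) :
    ∫⁻ x in Iio t, ENNReal.ofReal (lambdaKernel t x u v) =
      ENNReal.ofReal (exp (-(t - v) ^ 2 / (2 * (t - u))) / √(t - u)) := by
  have hc : 0 < t - u := sub_pos.2 hut
  have hrpow : (t - u) ^ ((3 : ℝ) / 2) = (t - u) * √(t - u) := by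
    rw [sqrt_eq_rpow, ← rpow_one_add' hc.le (by norm_num)]
    norm_num
  -- the reflection `x = 2t - v - y` turns the kernel into `y ↦ y e^{-y²/2(t-u)} / (t-u)^{3/2}`
  have himg : (fun y => 2 * t - v - y) '' Ioi (t - v) = Iio t := by
    rw [image_const_sub_Ioi]
    ring_nf
  rw [← himg, lintegral_image_eq_lintegral_abs_deriv_mul measurableSet_Ioi
    (fun y _ => ((hasDerivAt_id' y).const_sub _).hasDerivWithinAt) sub_right_injective.injOn]
  calc ∫⁻ y in Ioi (t - v),
        ENNReal.ofReal |-1| * ENNReal.ofReal (lambdaKernel t (2 * t - v - y) u v)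
      = ∫⁻ y in Ioi (t - v), ENNReal.ofReal (1 / ((t - u) * √(t - u))) *
          ENNReal.ofReal (y * exp (-y ^ 2 / (2 * (t - u)))) := by
        refine setLIntegral_congr_fun measurableSet_Ioi fun y _ => ?_
        rw [abs_neg, abs_one, ENNReal.ofReal_one, one_mul, lambdaKernel, hrpow,
          ← ENNReal.ofReal_mul (by positivity)]
        congr 1
        ring_nf
    _ = ENNReal.ofReal (exp (-(t - v) ^ 2 / (2 * (t - u))) / √(t - u)) := by
        rw [lintegral_const_mul' _ _ ENNReal.ofReal_ne_top,
          lintegral_Ioi_mul_exp_neg_sq_div (sub_nonneg.2 hvt) hc,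
          ← ENNReal.ofReal_mul (by positivity)]
        congr 1
        field_simp

theorem setLIntegral_lambdaKernel {l u v : ℝ} (hl : 0 < 1 + 2 * l) (hvu : v < u) :
    ∫⁻ p in {p : ℝ × ℝ | p.1 ∈ Ioi u ∧ p.2 ∈ Iio p.1},
        ENNReal.ofReal (exp (-l * p.1)) *
          (ENNReal.ofReal √(2 / π) * ENNReal.ofReal (lambdaKernel p.1 p.2 u v)) =
      ENNReal.ofReal (2 / √(1 + 2 * l) * exp (-(l * u + (u - v) * (1 + √(1 + 2 * l))))) := by
  set S := √(1 + 2 * l)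
  have hS : 0 < S := sqrt_pos.2 hl
  have hS_sq : S ^ 2 = 1 + 2 * l := sq_sqrt hl.le
  have h2 : √2 ^ 2 = 2 := sq_sqrt zero_le_two
  have hvu' : 0 < u - v := sub_pos.2 hvu
  have hshift : (· + u) '' Ioi 0 = Ioi u := by simp
  rw [Measure.volume_eq_prod, setLIntegral_prod_fiber measurableSet_Ioi
    (by measurability) (by unfold lambdaKernel; fun_prop), ← hshift,
    lintegral_image_eq_lintegral_abs_deriv_mul measurableSet_Ioi
      (fun s _ => ((hasDerivAt_id' s).add_const u).hasDerivWithinAt) (add_left_injective u).injOn]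
  calc ∫⁻ s in Ioi 0, ENNReal.ofReal |1| * ∫⁻ x in Iio (s + u),
          ENNReal.ofReal (exp (-l * (s + u))) *
            (ENNReal.ofReal √(2 / π) * ENNReal.ofReal (lambdaKernel (s + u) x u v))
      = ∫⁻ s in Ioi 0, ENNReal.ofReal (√(2 / π) * exp (-(l * u + (u - v)))) *
          ENNReal.ofReal (exp (-((S / √2) ^ 2 * s + ((u - v) / √2) ^ 2 / s)) / √s) := by
        refine setLIntegral_congr_fun measurableSet_Ioi fun s (hs : 0 < s) => ?_
        rw [abs_one, ENNReal.ofReal_one, one_mul, lintegral_const_mul' _ _ ENNReal.ofReal_ne_top,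
          lintegral_const_mul' _ _ ENNReal.ofReal_ne_top,
          lintegral_Iio_lambdaKernel (by linarith) (by linarith),
          ← ENNReal.ofReal_mul (by positivity), ← ENNReal.ofReal_mul (by positivity),
          ← ENNReal.ofReal_mul (by positivity)]
        congr 1
        rw [div_pow, div_pow, hS_sq, h2, add_sub_cancel_right]
        have hexp : exp (-l * (s + u)) * exp (-(s + u - v) ^ 2 / (2 * s)) =
            exp (-(l * u + (u - v))) * exp (-((1 + 2 * l) / 2 * s + (u - v) ^ 2 / 2 / s)) := by
          rw [← exp_add, ← exp_add]
          congr 1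
          field_simp
          ring
        linear_combination (√(2 / π) / √s) * hexp
    _ = _ := by
        rw [lintegral_const_mul' _ _ ENNReal.ofReal_ne_top,
          lintegral_Ioi_exp_neg_mul_add_div_div_sqrt (by positivity) (by positivity),
          ← ENNReal.ofReal_mul (by positivity)]
        have hcoef : √(2 / π) * (√π / (S / √2)) = 2 / S := by
          rw [sqrt_div zero_le_two]
          field_simp
          linear_combination h2
        have hexp : exp (-(l * u + (u - v))) * exp (-(2 * (S / √2) * ((u - v) / √2))) =
            exp (-(l * u + (u - v) * (1 + S))) := by
          rw [← exp_add]
          congr 1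
          field_simp
          linear_combination (u - v) * S * h2
        rw [mul_mul_mul_comm, hcoef, hexp]

theorem Lambda_laplace_identity (l : ℝ) (hl : 0 ≤ l) (h : ℝ → ℝ → ℝ≥0∞)
    (hmeas : Measurable fun p : ℝ × ℝ => h p.1 p.2) :
    ∫⁻ p : ℝ × ℝ in {p : ℝ × ℝ | 0 < p.1 ∧ p.2 < p.1},
        ENNReal.ofReal (Real.exp (-l * p.1)) *
          (ENNReal.ofReal (Real.sqrt (2 / π)) *
            ∫⁻ u in Set.Ioo 0 p.1, ∫⁻ v in Set.Iio u,
              ENNReal.ofReal ((2 * p.1 - p.2 - v) / (p.1 - u) ^ ((3 : ℝ) / 2) *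
                Real.exp (-(2 * p.1 - p.2 - v) ^ 2 / (2 * (p.1 - u)))) * h u v)
      = ENNReal.ofReal (2 / Real.sqrt (1 + 2 * l)) *
          ∫⁻ p : ℝ × ℝ in {p : ℝ × ℝ | 0 < p.1 ∧ p.2 < p.1},
            ENNReal.ofReal
              (Real.exp (-(l * p.1 + (p.1 - p.2) * (1 + Real.sqrt (1 + 2 * l))))) *
              h p.1 p.2 := by
  have hD : MeasurableSet {p : ℝ × ℝ | 0 < p.1 ∧ p.2 < p.1} := by measurability
  calc ∫⁻ p in {p : ℝ × ℝ | 0 < p.1 ∧ p.2 < p.1}, ENNReal.ofReal (exp (-l * p.1)) *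
          (ENNReal.ofReal √(2 / π) * ∫⁻ u in Ioo 0 p.1, ∫⁻ v in Iio u,
            ENNReal.ofReal (lambdaKernel p.1 p.2 u v) * h u v)
      = ∫⁻ p in {p : ℝ × ℝ | 0 < p.1 ∧ p.2 < p.1},
          ∫⁻ q in {q : ℝ × ℝ | q.1 ∈ Ioo 0 p.1 ∧ q.2 ∈ Iio q.1},
            ENNReal.ofReal (exp (-l * p.1)) * (ENNReal.ofReal √(2 / π) *
              ENNReal.ofReal (lambdaKernel p.1 p.2 q.1 q.2)) * h q.1 q.2 := by
        refine lintegral_congr fun p => ?_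
        rw [Measure.volume_eq_prod, setLIntegral_prod_fiber measurableSet_Ioo (by measurability)
          (by unfold lambdaKernel; fun_prop)]
        simp only [mul_assoc, lintegral_const_mul' _ _ ENNReal.ofReal_ne_top]
    _ = ∫⁻ q in {q : ℝ × ℝ | 0 < q.1 ∧ q.2 < q.1},
          ∫⁻ p in {p : ℝ × ℝ | p.1 ∈ Ioi q.1 ∧ p.2 ∈ Iio p.1},
            ENNReal.ofReal (exp (-l * p.1)) * (ENNReal.ofReal √(2 / π) *
              ENNReal.ofReal (lambdaKernel p.1 p.2 q.1 q.2)) * h q.1 q.2 :=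
        lintegral_lintegral_swap_fiber hD hD (by measurability)
          (fun p q => by
            constructor
            · rintro ⟨⟨-, hp⟩, ⟨hq₀, hqp⟩, hq⟩
              exact ⟨⟨hq₀, hq⟩, hqp, hp⟩
            · rintro ⟨⟨hq₀, hq⟩, hqp, hp⟩
              exact ⟨⟨hq₀.trans hqp, hp⟩, ⟨hq₀, hqp⟩, hq⟩)
          (by unfold lambdaKernel; fun_prop)
    _ = _ := by
        rw [← lintegral_const_mul' _ _ ENNReal.ofReal_ne_top]
        refine setLIntegral_congr_fun hD fun q ⟨_, hq⟩ => ?_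
        rw [lintegral_mul_const _ (by unfold lambdaKernel; fun_prop),
          setLIntegral_lambdaKernel (by linarith) hq, ENNReal.ofReal_mul (by positivity), mul_assoc]
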